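/- arXiv:2601.18080 — 2 statements merged into one kernel-verified Lean document; each statement's English description precedes it below -/
import Mathlib

section
/- In the tree-splitting kernel setting (operators A_1, …, A_d on a complex Hilbert space H with ∑ A_i*A_i ≤ I, defect D, feature map Φ₀ : X → H, kernel k₀, truncated kernel k̃_M, residual R_{N,M} with 0 ≤ M ≤ N), fix points x_1, …, x_m ∈ X and let K₀ and K̃_M be the m×m Gram matrices (K₀)_{jℓ} = k₀(x_j, x_ℓ) and (K̃_M)_{jℓ} = k̃_M(x_j, x_ℓ). Then K₀ − K̃_M is positive semidefinite, tr(K₀ − K̃_M) = ∑_{j=1}^m R_{N,M}(x_j), and K₀ − K̃_M ≤ (∑_{j=1}^m R_{N,M}(x_j)) I in the Loewner order on Hermitian m×m matrices. -/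
open ContinuousLinearMap ComplexOrder

/-- The operator `A_α = A_{i_n} ⋯ A_{i_1}` attached to the word `α = i_1 ⋯ i_n`;
the word is encoded as the list `[i_n, …, i_1]` (most recently applied letter first). -/
noncomputable def Aword {H : Type*} [NormedAddCommGroup H] [InnerProductSpace ℂ H]
    {d : ℕ} (A : Fin d → H →L[ℂ] H) : List (Fin d) → H →L[ℂ] H
  | [] => 1
  | i :: w => A i * Aword A w

/-!
Since `∑ᵢ Aᵢ* Aᵢ + D² = 1`, every inner product splits as
`⟪a, b⟫ = ∑ᵢ ⟪Aᵢ a, Aᵢ b⟫ + ⟪D a, D b⟫`. Iterating this `N` times along words writes `K₀` as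
the sum of the Gram matrices of the families `A_α Φ₀(xⱼ)` with `|α| = N` and `D A_α Φ₀(xⱼ)` with
`|α| < N`. Removing the terms with `|α| < M` leaves `K₀ - K̃_M` as a sum of Gram matrices: it is
positive semidefinite, with diagonal entries `R_{N,M}(xⱼ)`. Finally a positive semidefinite
matrix is dominated by its trace times the identity, since its largest eigenvalue is at most the
sum of all of them.
-/

open scoped MatrixOrder in
theorem Matrix.PosSemidef.trace_smul_one_sub {n 𝕜 : Type*} [Fintype n] [DecidableEq n]
    [RCLike 𝕜] {P : Matrix n n 𝕜} (hP : P.PosSemidef) :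
    (P.trace • (1 : Matrix n n 𝕜) - P).PosSemidef := by
  have htrace : P.trace = ((∑ i, hP.1.eigenvalues i : ℝ) : 𝕜) := by
    rw [hP.1.trace_eq_sum_eigenvalues, RCLike.ofReal_sum]
  have hle : P ≤ algebraMap ℝ (Matrix n n 𝕜) (∑ i, hP.1.eigenvalues i) := by
    rw [le_algebraMap_iff_spectrum_le hP.1.isSelfAdjoint,
      hP.1.spectrum_real_eq_range_eigenvalues]
    rintro _ ⟨i, rfl⟩
    exact Finset.single_le_sum (fun j _ => hP.eigenvalues_nonneg j) (Finset.mem_univ i)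
  rwa [Matrix.le_iff, Algebra.algebraMap_eq_smul_one, RCLike.real_smul_eq_coe_smul (K := 𝕜),
    ← htrace] at hle

section TreeSplitting

variable {H : Type*} [NormedAddCommGroup H] [InnerProductSpace ℂ H] {d : ℕ}
  (A : Fin d → H →L[ℂ] H) (D : H →L[ℂ] H) {ι : Type*}

theorem Aword_ofFn_cons {n : ℕ} (i : Fin d) (α : Fin n → Fin d) :
    Aword A (List.ofFn (Fin.cons i α : Fin (n + 1) → Fin d)) = A i * Aword A (List.ofFn α) := by
  rw [List.ofFn_cons, Aword]

theorem sum_Aword_ofFn_succ {M : Type*} [AddCommMonoid M] (n : ℕ) (f : (H →L[ℂ] H) → M) :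
    ∑ α : Fin (n + 1) → Fin d, f (Aword A (List.ofFn α))
      = ∑ i, ∑ α : Fin n → Fin d, f (A i * Aword A (List.ofFn α)) := by
  rw [← (Fin.consEquiv fun _ => Fin d).sum_comp, Fintype.sum_prod_type]
  exact Fintype.sum_congr _ _ fun i => Fintype.sum_congr _ _ fun α =>
    congrArg f (Aword_ofFn_cons A i α)

noncomputable def residualGram (N M : ℕ) (v : ι → H) : Matrix ι ι ℂ :=
  ∑ α : Fin N → Fin d, Matrix.gram ℂ (Aword A (List.ofFn α) ∘ v)
    + ∑ n ∈ Finset.Ico M N, ∑ α : Fin n → Fin d,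
        Matrix.gram ℂ (D ∘ Aword A (List.ofFn α) ∘ v)

theorem posSemidef_residualGram [Finite ι] (N M : ℕ) (v : ι → H) :
    (residualGram A D N M v).PosSemidef :=
  .add (Matrix.posSemidef_sum _ fun _ _ => Matrix.posSemidef_gram ℂ _)
    (Matrix.posSemidef_sum _ fun _ _ => Matrix.posSemidef_sum _ fun _ _ =>
      Matrix.posSemidef_gram ℂ _)

theorem residualGram_apply_self (N M : ℕ) (v : ι → H) (j : ι) :
    residualGram A D N M v j j
      = (((∑ α : Fin N → Fin d, ‖Aword A (List.ofFn α) (v j)‖ ^ 2)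
        + ∑ n ∈ Finset.Ico M N, ∑ α : Fin n → Fin d,
            ‖D (Aword A (List.ofFn α) (v j))‖ ^ 2 : ℝ) : ℂ) := by
  simp only [residualGram, Matrix.add_apply, Matrix.sum_apply, Matrix.gram_apply,
    Function.comp_apply, inner_self_eq_norm_sq_to_K]
  norm_cast

variable {A D} [CompleteSpace H]

theorem inner_eq_sum_inner_add_inner_defect (hD : IsSelfAdjoint D)
    (hDsq : D * D = 1 - ∑ i, adjoint (A i) * A i) (a b : H) :
    inner ℂ a b = ∑ i, inner ℂ (A i a) (A i b) + inner ℂ (D a) (D b) := by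
  rw [← adjoint_inner_right, hD.adjoint_eq, ← mul_apply_eq_comp, hDsq]
  simp only [sub_apply, one_apply_eq_self, sum_apply, mul_apply_eq_comp, inner_sub_right,
    inner_sum, adjoint_inner_right]
  ring

theorem gram_eq_sum_gram_add_gram_defect (hD : IsSelfAdjoint D)
    (hDsq : D * D = 1 - ∑ i, adjoint (A i) * A i) (v : ι → H) :
    Matrix.gram ℂ v = ∑ i, Matrix.gram ℂ (A i ∘ v) + Matrix.gram ℂ (D ∘ v) := by
  ext j l
  simp only [Matrix.add_apply, Matrix.sum_apply, Matrix.gram_apply, Function.comp_apply]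
  exact inner_eq_sum_inner_add_inner_defect hD hDsq _ _

theorem gram_eq_sum_gram_Aword_add_sum_gram_defect (hD : IsSelfAdjoint D)
    (hDsq : D * D = 1 - ∑ i, adjoint (A i) * A i) (v : ι → H) (N : ℕ) :
    Matrix.gram ℂ v = ∑ α : Fin N → Fin d, Matrix.gram ℂ (Aword A (List.ofFn α) ∘ v)
      + ∑ n ∈ Finset.range N, ∑ α : Fin n → Fin d,
          Matrix.gram ℂ (D ∘ Aword A (List.ofFn α) ∘ v) := by
  induction N with
  | zero => simp [Aword]
  | succ N ih =>
    rw [ih, Finset.sum_range_succ, sum_Aword_ofFn_succ A N fun T => Matrix.gram ℂ (T ∘ v),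
      Finset.sum_comm]
    simp_rw [gram_eq_sum_gram_add_gram_defect hD hDsq (Aword A (List.ofFn _) ∘ v)]
    simp only [Finset.sum_add_distrib, FunLike.coe_mul_eq_comp, Function.comp_assoc]
    abel

theorem gram_sub_sum_range_eq_residualGram (hD : IsSelfAdjoint D)
    (hDsq : D * D = 1 - ∑ i, adjoint (A i) * A i) (v : ι → H) {M N : ℕ} (hMN : M ≤ N) :
    Matrix.gram ℂ v - ∑ n ∈ Finset.range M, ∑ α : Fin n → Fin d,
        Matrix.gram ℂ (D ∘ Aword A (List.ofFn α) ∘ v) = residualGram A D N M v := by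
  rw [gram_eq_sum_gram_Aword_add_sum_gram_defect hD hDsq v N,
    ← Finset.sum_range_add_sum_Ico _ hMN, residualGram]
  abel

end TreeSplitting

theorem gram_matrix_truncation_bounds_general
    {H : Type*} [NormedAddCommGroup H] [InnerProductSpace ℂ H] [CompleteSpace H]
    {X : Type*} {d : ℕ} (A : Fin d → H →L[ℂ] H)
    (D : H →L[ℂ] H) (hDpos : D.IsPositive)
    (hDsq : D * D = 1 - ∑ i, adjoint (A i) * A i)
    (Φ : X → H) (M N : ℕ) (hMN : M ≤ N)
    (R : X → ℝ)
    (hR : ∀ x, R x = (∑ α : Fin N → Fin d, ‖Aword A (List.ofFn α) (Φ x)‖ ^ 2)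
      + ∑ n ∈ Finset.Ico M N, ∑ α : Fin n → Fin d,
          ‖D (Aword A (List.ofFn α) (Φ x))‖ ^ 2)
    (m : ℕ) (pts : Fin m → X)
    (K₀ Kt : Matrix (Fin m) (Fin m) ℂ)
    (hK₀ : ∀ j l, K₀ j l = inner ℂ (Φ (pts j)) (Φ (pts l)))
    (hKt : ∀ j l, Kt j l = ∑ n ∈ Finset.range M, ∑ α : Fin n → Fin d,
      (inner ℂ (D (Aword A (List.ofFn α) (Φ (pts j))))
        (D (Aword A (List.ofFn α) (Φ (pts l)))) : ℂ)) :
    (K₀ - Kt).PosSemidef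
    ∧ (K₀ - Kt).trace = ((∑ j, R (pts j) : ℝ) : ℂ)
    ∧ (((∑ j, R (pts j) : ℝ) : ℂ) • (1 : Matrix (Fin m) (Fin m) ℂ)
        - (K₀ - Kt)).PosSemidef := by
  have hK₀' : K₀ = Matrix.gram ℂ (Φ ∘ pts) := Matrix.ext hK₀
  have hKt' : Kt = ∑ n ∈ Finset.range M, ∑ α : Fin n → Fin d,
      Matrix.gram ℂ (D ∘ Aword A (List.ofFn α) ∘ Φ ∘ pts) := by
    ext j l
    simp [hKt, Matrix.sum_apply]
  have hres : K₀ - Kt = residualGram A D N M (Φ ∘ pts) := by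
    rw [hK₀', hKt', gram_sub_sum_range_eq_residualGram hDpos.isSelfAdjoint hDsq _ hMN]
  have htrace : (K₀ - Kt).trace = ((∑ j, R (pts j) : ℝ) : ℂ) := by
    simp only [hres, Matrix.trace, Matrix.diag, residualGram_apply_self, hR, Function.comp_apply,
      Complex.ofReal_sum]
  have hpsd : (K₀ - Kt).PosSemidef := hres ▸ posSemidef_residualGram A D N M _
  exact ⟨hpsd, htrace, htrace ▸ hpsd.trace_smul_one_sub⟩

/-- **Gram-matrix level truncation bounds (Corollary 5.3).**
For sample points `x₁, …, x_m`, the difference `K₀ - K̃_M` of Gram matrices is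
positive semidefinite, its trace equals `∑ⱼ R_{N,M}(xⱼ)`, and
`K₀ - K̃_M ≤ (∑ⱼ R_{N,M}(xⱼ)) I` in the Loewner order (expressed by positive
semidefiniteness of the difference). -/
theorem gram_matrix_truncation_bounds
    {H : Type*} [NormedAddCommGroup H] [InnerProductSpace ℂ H] [CompleteSpace H]
    {X : Type*} {d : ℕ} (A : Fin d → H →L[ℂ] H)
    (hA : ((1 : H →L[ℂ] H) - ∑ i, adjoint (A i) * A i).IsPositive)
    (D : H →L[ℂ] H) (hDpos : D.IsPositive)
    (hDsq : D * D = 1 - ∑ i, adjoint (A i) * A i)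
    (Φ : X → H) (M N : ℕ) (hMN : M ≤ N)
    (R : X → ℝ)
    (hR : ∀ x, R x = (∑ α : Fin N → Fin d, ‖Aword A (List.ofFn α) (Φ x)‖ ^ 2)
      + ∑ n ∈ Finset.Ico M N, ∑ α : Fin n → Fin d,
          ‖D (Aword A (List.ofFn α) (Φ x))‖ ^ 2)
    (m : ℕ) (pts : Fin m → X)
    (K₀ Kt : Matrix (Fin m) (Fin m) ℂ)
    (hK₀ : ∀ j l, K₀ j l = inner ℂ (Φ (pts j)) (Φ (pts l)))
    (hKt : ∀ j l, Kt j l = ∑ n ∈ Finset.range M, ∑ α : Fin n → Fin d,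
      (inner ℂ (D (Aword A (List.ofFn α) (Φ (pts j))))
        (D (Aword A (List.ofFn α) (Φ (pts l)))) : ℂ)) :
    (K₀ - Kt).PosSemidef
    ∧ (K₀ - Kt).trace = ((∑ j, R (pts j) : ℝ) : ℂ)
    ∧ (((∑ j, R (pts j) : ℝ) : ℂ) • (1 : Matrix (Fin m) (Fin m) ℂ)
        - (K₀ - Kt)).PosSemidef :=
  gram_matrix_truncation_bounds_general A D hDpos hDsq Φ M N hMN R hR m pts K₀ Kt hK₀ hKt
end

section
/- In the tree-splitting kernel setting with depth N ≥ 1, let S ⊆ A_{<N} := {α : |α| < N} be a prefix-closed set of words, and define k_S(x,y) := ∑_{α∈S} ⟨D A_α Φ₀(x), D A_α Φ₀(y)⟩ and R_{N,S}(x) := ∑_{|α|=N} ‖A_α Φ₀(x)‖² + ∑_{α ∈ A_{<N}∖S} ‖D A_α Φ₀(x)‖². Then for all x ∈ X, k₀(x,x) − k_S(x,x) = R_{N,S}(x) ≥ 0, and for all x, y ∈ X, |k₀(x,y) − k_S(x,y)| ≤ (R_{N,S}(x) R_{N,S}(y))^{1/2}. -/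
/-!
The defect relation `D*D + ∑ Aᵢ*Aᵢ = 1` gives `⟪u, v⟫ = ⟪D u, D v⟫ + ∑ᵢ ⟪Aᵢ u, Aᵢ v⟫`; applied
along every branch of the word tree down to depth `N` it writes `k₀` as the depth-`N` terms plus
the defect terms of all shorter words. Removing the defect terms indexed by `S` leaves
`k₀ - k_S` as a finite sum of Gram terms `⟪e_j(x), e_j(y)⟫` whose diagonal is `R`: the identity
is then immediate and the bound is the Cauchy–Schwarz inequality.
-/

open ContinuousLinearMap

open Finset

theorem norm_sum_inner_le_sqrt_mul_sqrt {𝕜 E ι : Type*} [RCLike 𝕜] [SeminormedAddCommGroup E]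
    [InnerProductSpace 𝕜 E] (s : Finset ι) (a b : ι → E) :
    ‖∑ i ∈ s, inner 𝕜 (a i) (b i)‖ ≤ √(∑ i ∈ s, ‖a i‖ ^ 2) * √(∑ i ∈ s, ‖b i‖ ^ 2) :=
  calc ‖∑ i ∈ s, inner 𝕜 (a i) (b i)‖
      ≤ ∑ i ∈ s, ‖inner 𝕜 (a i) (b i)‖ := norm_sum_le _ _
    _ ≤ ∑ i ∈ s, ‖a i‖ * ‖b i‖ := sum_le_sum fun _ _ => norm_inner_le_norm _ _
    _ ≤ √(∑ i ∈ s, ‖a i‖ ^ 2) * √(∑ i ∈ s, ‖b i‖ ^ 2) := Real.sum_mul_le_sqrt_mul_sqrt _ _ _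

section Words

variable {d : ℕ} {M : Type*} [AddCommMonoid M]

theorem sum_ofFn_succ (n : ℕ) (f : List (Fin d) → M) :
    ∑ α : Fin (n + 1) → Fin d, f (List.ofFn α) =
      ∑ α : Fin n → Fin d, ∑ i, f (i :: List.ofFn α) := by
  rw [← Fintype.sum_equiv (Fin.consEquiv fun _ => Fin d) (fun p => f (p.1 :: List.ofFn p.2)) _
    fun p => by simp [Fin.consEquiv, List.ofFn_succ], Fintype.sum_prod_type, sum_comm]

theorem sum_eq_sum_range_sum_ofFn {N : ℕ} (S : Finset (List (Fin d)))
    (hS : ∀ w ∈ S, w.length < N) (f : List (Fin d) → M) :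
    ∑ w ∈ S, f w = ∑ n ∈ range N,
      ∑ α ∈ univ.filter (fun α : Fin n → Fin d => List.ofFn α ∈ S), f (List.ofFn α) := by
  rw [← sum_fiberwise_of_maps_to (g := List.length) (fun w hw => mem_range.2 (hS w hw))]
  refine sum_congr rfl fun n _ => ?_
  rw [← sum_image fun α _ β _ h => List.ofFn_injective h]
  congr 1
  ext w
  simp only [mem_image, mem_filter, mem_univ, true_and]
  constructor
  · rintro ⟨hw, rfl⟩
    exact ⟨fun i => w.get i, by simpa using hw, List.ofFn_get w⟩
  · rintro ⟨α, hα, rfl⟩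
    exact ⟨hα, List.length_ofFn⟩

end Words

section Defect

variable {H : Type*} [NormedAddCommGroup H] [InnerProductSpace ℂ H] [CompleteSpace H] {d : ℕ}
  (A : Fin d → H →L[ℂ] H) (D : H →L[ℂ] H)

theorem inner_eq_inner_add_sum_inner (hD : adjoint D * D = 1 - ∑ i, adjoint (A i) * A i)
    (u v : H) :
    inner ℂ u v = inner ℂ (D u) (D v) + ∑ i, inner ℂ (A i u) (A i v) :=
  calc inner ℂ u v = inner ℂ u ((adjoint D * D + ∑ i, adjoint (A i) * A i) v) := by
        rw [hD, sub_add_cancel, one_apply_eq_self]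
    _ = inner ℂ (D u) (D v) + ∑ i, inner ℂ (A i u) (A i v) := by
        simp only [add_apply, _root_.sum_apply, mul_apply_eq_comp, inner_add_right, inner_sum,
          adjoint_inner_right]

theorem inner_eq_sum_words (hD : adjoint D * D = 1 - ∑ i, adjoint (A i) * A i) (N : ℕ)
    (u v : H) :
    inner ℂ u v = ∑ α : Fin N → Fin d,
        inner ℂ (Aword A (List.ofFn α) u) (Aword A (List.ofFn α) v) +
      ∑ n ∈ range N, ∑ α : Fin n → Fin d,
        inner ℂ (D (Aword A (List.ofFn α) u)) (D (Aword A (List.ofFn α) v)) := by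
  induction N with
  | zero => simp [Aword]
  | succ N ih =>
    have hsum_A : ∀ x y : H,
        ∑ i, inner ℂ (A i x) (A i y) = inner ℂ x y - inner ℂ (D x) (D y) := fun x y => by
      rw [inner_eq_inner_add_sum_inner A D hD x y, add_sub_cancel_left]
    rw [ih, sum_ofFn_succ (f := fun w => inner ℂ (Aword A w u) (Aword A w v)), sum_range_succ]
    simp only [Aword, mul_apply_eq_comp, hsum_A, sum_sub_distrib]
    abel

end Defect

section Residual

variable {H : Type*} [NormedAddCommGroup H] [InnerProductSpace ℂ H] {d : ℕ}

def residualWords (S : Finset (List (Fin d))) (N : ℕ) :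
    Finset ((Fin N → Fin d) ⊕ (Σ n : ℕ, Fin n → Fin d)) :=
  univ.disjSum ((range N).sigma fun n => univ.filter fun α : Fin n → Fin d => List.ofFn α ∉ S)

theorem sum_residualWords {M : Type*} [AddCommMonoid M] (S : Finset (List (Fin d))) (N : ℕ)
    (f : (Fin N → Fin d) ⊕ (Σ n : ℕ, Fin n → Fin d) → M) :
    ∑ j ∈ residualWords S N, f j = ∑ α, f (.inl α) +
      ∑ n ∈ range N, ∑ α ∈ univ.filter (fun α : Fin n → Fin d => List.ofFn α ∉ S),
        f (.inr ⟨n, α⟩) := by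
  rw [residualWords, sum_disjSum, sum_sigma]

noncomputable def residualVector (A : Fin d → H →L[ℂ] H) (D : H →L[ℂ] H) (N : ℕ) (u : H) :
    (Fin N → Fin d) ⊕ (Σ n : ℕ, Fin n → Fin d) → H :=
  Sum.elim (fun α => Aword A (List.ofFn α) u) fun p => D (Aword A (List.ofFn p.2) u)

theorem inner_sub_sum_inner_eq_sum_residual [CompleteSpace H] (A : Fin d → H →L[ℂ] H)
    (D : H →L[ℂ] H) (hD : adjoint D * D = 1 - ∑ i, adjoint (A i) * A i) {N : ℕ}
    (S : Finset (List (Fin d))) (hS : ∀ w ∈ S, w.length < N) (u v : H) :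
    inner ℂ u v - ∑ w ∈ S, inner ℂ (D (Aword A w u)) (D (Aword A w v)) =
      ∑ j ∈ residualWords S N,
        inner ℂ (residualVector A D N u j) (residualVector A D N v j) := by
  rw [inner_eq_sum_words A D hD N, sum_eq_sum_range_sum_ofFn S hS, sum_residualWords,
    sum_congr rfl fun n _ =>
      (sum_filter_add_sum_filter_not univ (fun α : Fin n → Fin d => List.ofFn α ∈ S) _).symm,
    sum_add_distrib]
  simp only [residualVector, Sum.elim_inl, Sum.elim_inr]
  abel

end Residual

theorem prefix_closed_truncation_residual_general
    {H : Type*} [NormedAddCommGroup H] [InnerProductSpace ℂ H] [CompleteSpace H]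
    {X : Type*} {d : ℕ} (A : Fin d → H →L[ℂ] H)
    (D : H →L[ℂ] H) (hDpos : D.IsPositive)
    (hDsq : D * D = 1 - ∑ i, adjoint (A i) * A i)
    (Φ : X → H) (N : ℕ)
    (S : Finset (List (Fin d)))
    (hSlen : ∀ w ∈ S, w.length < N)
    (k₀ : X → X → ℂ) (hk₀ : ∀ x y, k₀ x y = inner ℂ (Φ x) (Φ y))
    (kS : X → X → ℂ)
    (hkS : ∀ x y, kS x y = ∑ w ∈ S,
      (inner ℂ (D (Aword A w (Φ x))) (D (Aword A w (Φ y))) : ℂ))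
    (R : X → ℝ)
    (hR : ∀ x, R x = (∑ α : Fin N → Fin d, ‖Aword A (List.ofFn α) (Φ x)‖ ^ 2)
      + ∑ n ∈ Finset.range N,
          ∑ α ∈ Finset.univ.filter (fun α : Fin n → Fin d => List.ofFn α ∉ S),
            ‖D (Aword A (List.ofFn α) (Φ x))‖ ^ 2) :
    (∀ x : X, k₀ x x - kS x x = (R x : ℂ) ∧ 0 ≤ R x)
    ∧ (∀ x y : X, ‖k₀ x y - kS x y‖ ≤ Real.sqrt (R x * R y)) := by
  set e := residualVector A D N
  have hD : adjoint D * D = 1 - ∑ i, adjoint (A i) * A i := by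
    rw [hDpos.isSelfAdjoint.adjoint_eq, hDsq]
  have hk : ∀ x y, k₀ x y - kS x y =
      ∑ j ∈ residualWords S N, inner ℂ (e (Φ x) j) (e (Φ y) j) := fun x y => by
    rw [hk₀, hkS, inner_sub_sum_inner_eq_sum_residual A D hD S hSlen]
  have hRe : ∀ x, R x = ∑ j ∈ residualWords S N, ‖e (Φ x) j‖ ^ 2 := fun x => by
    rw [hR, sum_residualWords]
    rfl
  have hR_nonneg : ∀ x, 0 ≤ R x := fun x => hRe x ▸ sum_nonneg fun _ _ => sq_nonneg _
  refine ⟨fun x => ⟨?_, hR_nonneg x⟩, fun x y => ?_⟩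
  · rw [hk, hRe]
    push_cast
    exact sum_congr rfl fun j _ => inner_self_eq_norm_sq_to_K _
  · rw [hk, Real.sqrt_mul (hR_nonneg x), hRe, hRe]
    exact norm_sum_inner_le_sqrt_mul_sqrt _ _ _

/-- **Residual energy identity for prefix-closed truncations (Corollary 6.2).**
`S` is a prefix-closed set of words of length `< N`, `k_S` keeps the defect blocks
indexed by `S`, and `R_{N,S}` is the residual energy beyond `S` at depth `N`.  Then
`k₀(x,x) - k_S(x,x) = R_{N,S}(x) ≥ 0` and
`|k₀(x,y) - k_S(x,y)| ≤ (R_{N,S}(x) R_{N,S}(y))^{1/2}`. -/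
theorem prefix_closed_truncation_residual
    {H : Type*} [NormedAddCommGroup H] [InnerProductSpace ℂ H] [CompleteSpace H]
    {X : Type*} {d : ℕ} (A : Fin d → H →L[ℂ] H)
    (hA : ((1 : H →L[ℂ] H) - ∑ i, adjoint (A i) * A i).IsPositive)
    (D : H →L[ℂ] H) (hDpos : D.IsPositive)
    (hDsq : D * D = 1 - ∑ i, adjoint (A i) * A i)
    (Φ : X → H) (N : ℕ) (hN : 1 ≤ N)
    (S : Finset (List (Fin d)))
    (hSlen : ∀ w ∈ S, w.length < N)
    (hSprefix : ∀ w ∈ S, w ≠ [] → w.tail ∈ S)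
    (k₀ : X → X → ℂ) (hk₀ : ∀ x y, k₀ x y = inner ℂ (Φ x) (Φ y))
    (kS : X → X → ℂ)
    (hkS : ∀ x y, kS x y = ∑ w ∈ S,
      (inner ℂ (D (Aword A w (Φ x))) (D (Aword A w (Φ y))) : ℂ))
    (R : X → ℝ)
    (hR : ∀ x, R x = (∑ α : Fin N → Fin d, ‖Aword A (List.ofFn α) (Φ x)‖ ^ 2)
      + ∑ n ∈ Finset.range N,
          ∑ α ∈ Finset.univ.filter (fun α : Fin n → Fin d => List.ofFn α ∉ S),
            ‖D (Aword A (List.ofFn α) (Φ x))‖ ^ 2) :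
    (∀ x : X, k₀ x x - kS x x = (R x : ℂ) ∧ 0 ≤ R x)
    ∧ (∀ x y : X, ‖k₀ x y - kS x y‖ ≤ Real.sqrt (R x * R y)) :=
  prefix_closed_truncation_residual_general A D hDpos hDsq Φ N S hSlen k₀ hk₀ kS hkS R hR
end
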